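/- arXiv:2506.05156 — 11 statements merged into one kernel-verified Lean document; each statement's English description precedes it below -/
import Mathlib

section
/- Let n ∈ ℕ and let π be a permutation of {1,…,n}, viewed as the sequence π(1),…,π(n); write v₁ ≺_π v₂ for π⁻¹(v₁) < π⁻¹(v₂). Let Q(π) be the graph with vertex set {(v, a) : v ∈ {1,…,n}, a ∈ {1,2}} and edge set {{(v,1),(v,2)} : v ∈ {1,…,n}}, equipped with the linear order ≺_{Q(π)} in which (v₁,a₁) ≺_{Q(π)} (v₂,a₂) iff a₁ < a₂, or a₁ = a₂ = 1 and v₁ < v₂, or a₁ = a₂ = 2 and v₁ ≺_π v₂. Then for all v₁ ≠ v₂ in {1,…,n}, the edges {(v₁,1),(v₁,2)} and {(v₂,1),(v₂,2)} of Q(π) are in a nesting relation with respect to ≺_{Q(π)} if and only if v₁ and v₂ are adjacent in the permutation graph G_π, i.e., if and only if (v₁ < v₂ and v₂ ≺_π v₁) or (v₂ < v₁ and v₁ ≺_π v₂). -/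
/-- Two edges, given with their endpoints already listed in increasing order
with respect to the strict order `r` (`r a₁ b₁` and `r a₂ b₂`), are in a
nesting relation with respect to `r`. -/
def NestsPtsRel {V : Type*} (r : V → V → Prop) (a₁ b₁ a₂ b₂ : V) : Prop :=
  (r a₁ a₂ ∧ r a₂ b₂ ∧ r b₂ b₁) ∨ (r a₂ a₁ ∧ r a₁ b₁ ∧ r b₁ b₂)

/-- The linear order `≺_{Q(π)}` on the vertex set `{1,…,n} × {1,2}` of the
graph `Q(π)`: `(v₁, a₁) ≺ (v₂, a₂)` iff `a₁ < a₂`, or `a₁ = a₂ = 1` and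
`v₁ < v₂`, or `a₁ = a₂ = 2` and `π⁻¹(v₁) < π⁻¹(v₂)`.  (Here `0 : Fin 2`
plays the role of `1` and `1 : Fin 2` plays the role of `2`.) -/
def qOrder {n : ℕ} (π : Equiv.Perm (Fin n)) :
    (Fin n × Fin 2) → (Fin n × Fin 2) → Prop :=
  fun p q => p.2 < q.2 ∨ (p.2 = 0 ∧ q.2 = 0 ∧ p.1 < q.1) ∨
    (p.2 = 1 ∧ q.2 = 1 ∧ π.symm p.1 < π.symm q.1)

/-- For distinct `v₁ v₂`, the edges `{(v₁,1),(v₁,2)}` and `{(v₂,1),(v₂,2)}`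
of `Q(π)` are in a nesting relation with respect to `≺_{Q(π)}` iff `v₁` and
`v₂` are adjacent in the permutation graph `G_π`. -/
theorem stmt2 {n : ℕ} (π : Equiv.Perm (Fin n)) (v₁ v₂ : Fin n) (h : v₁ ≠ v₂) :
    NestsPtsRel (qOrder π) (v₁, 0) (v₁, 1) (v₂, 0) (v₂, 1) ↔
      ((v₁ < v₂ ∧ π.symm v₂ < π.symm v₁) ∨ (v₂ < v₁ ∧ π.symm v₁ < π.symm v₂)) := by
  simp only [NestsPtsRel, qOrder, show ∀ a b : Fin 2, a < b ↔ (a = 0 ∧ b = 1) from by decide,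
    show ((1:Fin 2) ≠ 0) from by decide, show ((0:Fin 2) ≠ 1) from by decide]
  tauto
end

section
/- Let H be a spanning subgraph of a finite graph G (i.e., V(G) = V(H)), let ⟨≺, σ_H⟩ be an ℓ-page queue layout of H, let E_add = E(G) \ E(H) and m_add = |E_add|. Suppose e ∈ E_add satisfies |P(e)| ≥ m_add, where P(e) is the set of admissible pages of e with respect to ≺, E(H) and σ_H. Then there exists σ_G : E(G) → {1,…,ℓ} with σ_G(e') = σ_H(e') for all e' ∈ E(H) such that ⟨≺, σ_G⟩ is an ℓ-page queue layout of G, if and only if there exists σ' : E(G) \ {e} → {1,…,ℓ} with σ'(e') = σ_H(e') for all e' ∈ E(H) such that ⟨≺, σ'⟩ is an ℓ-page queue layout of G − e. -/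
/-- Two (unordered) edges are in a nesting relation with respect to the
linear order on `V`: there are `a ≺ b ≺ c ≺ d` such that one edge is `{a, d}`
and the other is `{b, c}`. -/
def Nests {V : Type*} [LinearOrder V] (e₁ e₂ : Sym2 V) : Prop :=
  ∃ a b c d : V, a < b ∧ b < c ∧ c < d ∧
    ((e₁ = s(a, d) ∧ e₂ = s(b, c)) ∨ (e₁ = s(b, c) ∧ e₂ = s(a, d)))

/-- `⟨<, σ⟩` is an `ℓ`-page queue layout of `G`: no two edges of `G`
assigned to the same page are in a nesting relation. -/
def IsQueueLayout {V : Type*} [LinearOrder V] {ℓ : ℕ} (G : SimpleGraph V)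
    (σ : Sym2 V → Fin ℓ) : Prop :=
  ∀ e₁ ∈ G.edgeSet, ∀ e₂ ∈ G.edgeSet, σ e₁ = σ e₂ → ¬ Nests e₁ e₂

/-- The set of admissible pages of an edge `e` with respect to a set of
already placed edges `Efix` with page assignment `σfix`: the pages `p` such
that `e` is in a nesting relation with no edge of `Efix` assigned to `p`. -/
def admissiblePages {V : Type*} [LinearOrder V] {ℓ : ℕ} (Efix : Set (Sym2 V))
    (σfix : Sym2 V → Fin ℓ) (e : Sym2 V) : Set (Fin ℓ) :=
  {p | ∀ e' ∈ Efix, σfix e' = p → ¬ Nests e e'}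

lemma nests_symm {V : Type*} [LinearOrder V] {e₁ e₂ : Sym2 V}
    (h : Nests e₁ e₂) : Nests e₂ e₁ := by
  obtain ⟨a, b, c, d, h1, h2, h3, h4⟩ := h
  exact ⟨a, b, c, d, h1, h2, h3, h4.symm.imp And.symm And.symm⟩

lemma nests_irrefl {V : Type*} [LinearOrder V] (e : Sym2 V) : ¬ Nests e e := by
  rintro ⟨a, b, c, d, h1, h2, h3, (⟨rfl, h⟩ | ⟨rfl, h⟩)⟩ <;>
  · rw [Sym2.eq_iff] at h
    rcases h with ⟨rfl, rfl⟩ | ⟨rfl, rfl⟩ <;> first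
      | exact lt_irrefl _ h1
      | exact absurd h2 (lt_asymm h1)

/-- If `H` is a spanning subgraph of `G`, `⟨<, σH⟩` is an `ℓ`-page queue
layout of `H`, and `e` is a missing edge with at least `m_add` admissible
pages, then the extension instance for `G` is solvable iff the one for
`G − e` is solvable. -/
theorem stmt5 {V : Type*} [Fintype V] [LinearOrder V] {ℓ : ℕ}
    (G H : SimpleGraph V) (hHG : H ≤ G)
    (σH : Sym2 V → Fin ℓ) (hQH : IsQueueLayout H σH)
    (e : Sym2 V) (he : e ∈ G.edgeSet \ H.edgeSet)
    (hP : (G.edgeSet \ H.edgeSet).ncard ≤ (admissiblePages H.edgeSet σH e).ncard) :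
    (∃ σG : Sym2 V → Fin ℓ, (∀ e' ∈ H.edgeSet, σG e' = σH e') ∧
        IsQueueLayout G σG) ↔
      (∃ σ' : Sym2 V → Fin ℓ, (∀ e' ∈ H.edgeSet, σ' e' = σH e') ∧
        IsQueueLayout (G.deleteEdges {e}) σ') := by
  have hdel : (G.deleteEdges {e}).edgeSet = G.edgeSet \ {e} :=
    SimpleGraph.edgeSet_deleteEdges _
  constructor
  · rintro ⟨σG, hag, hQ⟩
    refine ⟨σG, hag, fun e₁ h1 e₂ h2 heq => ?_⟩
    rw [hdel] at h1 h2
    exact hQ e₁ h1.1 e₂ h2.1 heq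
  · rintro ⟨σ', hag, hQ'⟩
    classical
    set S : Set (Sym2 V) := (G.edgeSet \ H.edgeSet) \ {e} with hS
    have hEfin : (G.edgeSet \ H.edgeSet).Finite := Set.toFinite _
    have hSfin : S.Finite := Set.toFinite _
    have hcard : (σ' '' S).ncard < (admissiblePages H.edgeSet σH e).ncard := by
      calc (σ' '' S).ncard ≤ S.ncard := Set.ncard_image_le hSfin
        _ < (G.edgeSet \ H.edgeSet).ncard :=
            Set.ncard_diff_singleton_lt_of_mem he hEfin
        _ ≤ _ := hP
    have hne : ((admissiblePages H.edgeSet σH e) \ (σ' '' S)).Nonempty := by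
      rw [Set.nonempty_iff_ne_empty]
      intro hempty
      have hsub : admissiblePages H.edgeSet σH e ⊆ σ' '' S :=
        Set.diff_eq_empty.mp hempty
      exact absurd (Set.ncard_le_ncard hsub (Set.toFinite _)) (not_le.mpr hcard)
    obtain ⟨p, hpP, hpS⟩ := hne
    refine ⟨fun x => if x = e then p else σ' x, ?_, ?_⟩
    · intro e' he'
      have : e' ≠ e := fun h => he.2 (h ▸ he')
      simp [this, hag e' he']
    · intro e₁ h1 e₂ h2 heq hnest
      by_cases h1e : e₁ = e <;> by_cases h2e : e₂ = e
      · rw [h1e, h2e] at hnest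
        exact nests_irrefl e hnest
      all_goals simp only [h1e, h2e, if_pos, if_neg, if_true, ite_true,
        ite_false, if_false] at heq
      · -- e₁ = e, e₂ ≠ e
        subst h1e
        by_cases h2H : e₂ ∈ H.edgeSet
        · exact hpP e₂ h2H (hag e₂ h2H ▸ heq.symm) hnest
        · exact hpS ⟨e₂, ⟨⟨h2, h2H⟩, h2e⟩, heq.symm⟩
      · -- e₂ = e, e₁ ≠ e
        subst h2e
        by_cases h1H : e₁ ∈ H.edgeSet
        · exact hpP e₁ h1H (hag e₁ h1H ▸ heq) (nests_symm hnest)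
        · exact hpS ⟨e₁, ⟨⟨h1, h1H⟩, h1e⟩, heq⟩
      · exact hQ' e₁ (hdel ▸ ⟨h1, h1e⟩) e₂ (hdel ▸ ⟨h2, h2e⟩) heq hnest
end

section
/- Let (V, ≺) be a linear order, let E_fix be a set of edges over V with a page assignment σ_fix : E_fix → {1,…,ℓ}, and let u, v, x, y, z ∈ V with u ≺ v, u ≺ x ≺ y ≺ z, v ≺ y and v ≠ x. Consider the edges e₁ = {v, x}, e₂ = {u, y} and e₃ = {u, z}. Then every page p ∈ P(e₁) ∩ P(e₃) satisfies p ∈ P(e₂), where P(·) denotes the set of admissible pages with respect to ≺, E_fix and σ_fix. -/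
/-- For new edges `e₁ = {v, x}`, `e₂ = {u, y}`, `e₃ = {u, z}` with
`u ≺ x ≺ y ≺ z` and `v ≺ y`: any page admissible for `e₁` and `e₃` is
admissible for `e₂`. -/
theorem stmt6 {V : Type*} [LinearOrder V] {ℓ : ℕ}
    (Efix : Set (Sym2 V)) (σfix : Sym2 V → Fin ℓ)
    (u v x y z : V) (huv : u < v) (hux : u < x) (hxy : x < y) (hyz : y < z)
    (hvy : v < y) (hvx : v ≠ x) (p : Fin ℓ)
    (h₁ : p ∈ admissiblePages Efix σfix s(v, x))
    (h₃ : p ∈ admissiblePages Efix σfix s(u, z)) :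
    p ∈ admissiblePages Efix σfix s(u, y) := by
  intro e' he' hσ hN
  obtain ⟨a, b, c, d, hab, hbc, hcd, hcase⟩ := hN
  rcases hcase with ⟨huy, he⟩ | ⟨huy, he⟩
  · rw [Sym2.eq_iff] at huy
    rcases huy with ⟨hua, hyd⟩ | ⟨hud, hya⟩
    · subst hua; subst hyd
      exact h₃ e' he' hσ ⟨u, b, c, z, hab, hbc, hcd.trans hyz,
        Or.inl ⟨rfl, he⟩⟩
    · subst hud; subst hya
      exact absurd ((hab.trans hbc).trans hcd) (lt_asymm (hux.trans hxy))
  · rw [Sym2.eq_iff] at huy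
    rcases huy with ⟨hub, hyc⟩ | ⟨huc, hyb⟩
    · subst hub; subst hyc
      refine h₁ e' he' hσ ?_
      rcases hvx.lt_or_gt with hlt | hlt
      · exact ⟨a, v, x, d, hab.trans huv, hlt, hxy.trans hcd, Or.inr ⟨rfl, he⟩⟩
      · exact ⟨a, x, v, d, hab.trans hux, hlt, hvy.trans hcd,
          Or.inr ⟨Sym2.eq_swap, he⟩⟩
    · subst huc; subst hyb
      exact absurd hbc (not_lt.2 (hux.trans hxy).le)
end

section
/- Let (V, ≺) be a linear order, let E_fix be a set of edges over V with a page assignment σ_fix : E_fix → {1,…,ℓ}, and let u, v, x, y, z ∈ V with u ≺ v, z ≺ y ≺ x ≺ v, y ≺ u and u ≠ x. Consider the edges e₁ = {u, x}, e₂ = {v, y} and e₃ = {v, z}. Then every page p ∈ P(e₁) ∩ P(e₃) satisfies p ∈ P(e₂), where P(·) denotes the set of admissible pages with respect to ≺, E_fix and σ_fix. -/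
/-- For new edges `e₁ = {u, x}`, `e₂ = {v, y}`, `e₃ = {v, z}` with
`z ≺ y ≺ x ≺ v` and `y ≺ u`: any page admissible for `e₁` and `e₃` is
admissible for `e₂`. -/
theorem stmt7 {V : Type*} [LinearOrder V] {ℓ : ℕ}
    (Efix : Set (Sym2 V)) (σfix : Sym2 V → Fin ℓ)
    (u v x y z : V) (huv : u < v) (hzy : z < y) (hyx : y < x) (hxv : x < v)
    (hyu : y < u) (hux : u ≠ x) (p : Fin ℓ)
    (h₁ : p ∈ admissiblePages Efix σfix s(u, x))
    (h₃ : p ∈ admissiblePages Efix σfix s(v, z)) :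
    p ∈ admissiblePages Efix σfix s(v, y) := by
  intro e' he' hσ hn
  obtain ⟨a, b, c, d, hab, hbc, hcd, h⟩ := hn
  rcases h with ⟨h1, h2⟩ | ⟨h1, h2⟩
  · -- s(v,y) = s(a,d), so a = y, d = v
    rw [Sym2.eq_iff] at h1
    rcases h1 with ⟨hva, hyd⟩ | ⟨hvd, hya⟩
    · exact absurd (hva ▸ hyd ▸ (hab.trans (hbc.trans hcd))) (not_lt.2 (le_of_lt (hyx.trans hxv)))
    · subst hvd; subst hya
      exact h₃ e' he' hσ ⟨z, b, c, v, hzy.trans hab, hbc, hcd,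
        Or.inl ⟨Sym2.eq_swap, h2⟩⟩
  · -- s(v,y) = s(b,c), so b = y, c = v
    rw [Sym2.eq_iff] at h1
    rcases h1 with ⟨hvb, hyc⟩ | ⟨hvc, hyb⟩
    · exact absurd (hvb ▸ hyc ▸ hbc) (not_lt.2 (le_of_lt (hyx.trans hxv)))
    · subst hvc; subst hyb
      rcases lt_or_ge a z with haz | hza
      · exact h₃ e' he' hσ ⟨a, z, v, d, haz, hzy.trans (hyx.trans hxv), hcd,
          Or.inr ⟨Sym2.eq_swap, h2⟩⟩
      · rcases lt_or_gt_of_ne hux with h' | h'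
        · exact h₁ e' he' hσ ⟨a, u, x, d, hab.trans hyu, h', hxv.trans hcd,
            Or.inr ⟨rfl, h2⟩⟩
        · exact h₁ e' he' hσ ⟨a, x, u, d, hab.trans hyx, h', huv.trans hcd,
            Or.inr ⟨Sym2.eq_swap, h2⟩⟩
end

section
/- Let (V, ≺) be a finite linear order and u, v ∈ V with u ≺ v. Let E_fix be a set of edges over V with a page assignment σ_fix : E_fix → {1,…,ℓ} such that no two edges of E_fix assigned to the same page are in a nesting relation, and let E_add be a set of edges disjoint from E_fix, each having exactly one endpoint in {u, v} and the other endpoint in V \ {u, v}. Call the pair (E_fix ∪ E_add) solvable if there exists σ : E_fix ∪ E_add → {1,…,ℓ} with σ(e') = σ_fix(e') for all e' ∈ E_fix such that no two edges assigned to the same page are in a nesting relation. Suppose e = {u, y} ∈ E_add with y ≺ v and |P(e)| ≥ 2, where P(e) is the set of admissible pages of e with respect to ≺, E_fix and σ_fix. Then the instance with edge set E_fix ∪ E_add is solvable if and only if the instance with edge set E_fix ∪ (E_add \ {e}) is solvable. -/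
/-- The instance with edge set `E` is solvable: there is a page assignment
agreeing with `σfix` on `Efix` such that no two edges of `E` assigned to the
same page are in a nesting relation. -/
def Solvable {V : Type*} [LinearOrder V] {ℓ : ℕ} (Efix : Set (Sym2 V))
    (σfix : Sym2 V → Fin ℓ) (E : Set (Sym2 V)) : Prop :=
  ∃ σ : Sym2 V → Fin ℓ, (∀ e ∈ Efix, σ e = σfix e) ∧
    ∀ e₁ ∈ E, ∀ e₂ ∈ E, σ e₁ = σ e₂ → ¬ Nests e₁ e₂

namespace Stmt9Aux

variable {V : Type*} [LinearOrder V]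

lemma nests_comm {e₁ e₂ : Sym2 V} (h : Nests e₁ e₂) : Nests e₂ e₁ := by
  obtain ⟨a, b, c, d, h1, h2, h3, ⟨ha, hb⟩ | ⟨ha, hb⟩⟩ := h
  exacts [⟨a, b, c, d, h1, h2, h3, Or.inr ⟨hb, ha⟩⟩, ⟨a, b, c, d, h1, h2, h3, Or.inl ⟨hb, ha⟩⟩]

lemma not_nests_of_mem {e₁ e₂ : Sym2 V} (z : V) (h₁ : z ∈ e₁) (h₂ : z ∈ e₂) :
    ¬ Nests e₁ e₂ := by
  rintro ⟨a, b, c, d, hab, hbc, hcd, ⟨rfl, rfl⟩ | ⟨rfl, rfl⟩⟩ <;>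
    rw [Sym2.mem_iff] at h₁ h₂ <;>
    rcases h₁ with rfl | rfl <;> rcases h₂ with h | h <;>
    first
      | exact (ne_of_lt hab) h
      | exact (ne_of_lt hbc) h
      | exact (ne_of_lt hcd) h
      | exact (ne_of_lt (hab.trans hbc)) h
      | exact (ne_of_lt (hbc.trans hcd)) h
      | exact (ne_of_lt ((hab.trans hbc).trans hcd)) h
      | exact (ne_of_lt hab) h.symm
      | exact (ne_of_lt hbc) h.symm
      | exact (ne_of_lt hcd) h.symm
      | exact (ne_of_lt (hab.trans hbc)) h.symm
      | exact (ne_of_lt (hbc.trans hcd)) h.symm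
      | exact (ne_of_lt ((hab.trans hbc).trans hcd)) h.symm

lemma nests_irrefl (x : Sym2 V) : ¬ Nests x x := by
  rintro ⟨a, b, c, d, hab, hbc, hcd, ⟨h1, h2⟩ | ⟨h1, h2⟩⟩
  · rcases Sym2.eq_iff.mp (h1.symm.trans h2) with ⟨h4, h5⟩ | ⟨h4, h5⟩
    · exact (ne_of_lt hab) h4
    · exact (ne_of_lt (hbc.trans hcd)) h5.symm
  · rcases Sym2.eq_iff.mp (h1.symm.trans h2) with ⟨h4, h5⟩ | ⟨h4, h5⟩
    · exact (ne_of_lt hab) h4.symm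
    · exact (ne_of_lt (hbc.trans hcd)) h4

lemma key {ℓ : ℕ} (u v : V) (huv : u < v)
    (Efix Eadd : Set (Sym2 V)) (hdisj : Disjoint Efix Eadd)
    (σfix : Sym2 V → Fin ℓ)
    (hadd : ∀ e ∈ Eadd, ∃ w : V, w ≠ u ∧ w ≠ v ∧ (e = s(u, w) ∨ e = s(v, w)))
    (y : V) (hy : y < v) (hyu : y ≠ u) (hey : s(u, y) ∈ Eadd)
    (p₁ p₂ : Fin ℓ) (hne : p₁ ≠ p₂)
    (hp₁ : ∀ e' ∈ Efix, σfix e' = p₁ → ¬ Nests s(u, y) e')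
    (hp₂ : ∀ e' ∈ Efix, σfix e' = p₂ → ¬ Nests s(u, y) e')
    (σ : Sym2 V → Fin ℓ)
    (hagree : ∀ e ∈ Efix, σ e = σfix e)
    (hval : ∀ e₁ ∈ Efix ∪ (Eadd \ {s(u, y)}), ∀ e₂ ∈ Efix ∪ (Eadd \ {s(u, y)}),
      σ e₁ = σ e₂ → ¬ Nests e₁ e₂)
    (hmv : ∀ w : V, w < min u y → s(v, w) ∈ Eadd → σ s(v, w) = p₂ →
      ∃ w₁ : V, w₁ < min u y ∧ w₁ ≤ w ∧ s(v, w₁) ∈ Eadd ∧ σ s(v, w₁) = p₁) :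
    Solvable Efix σfix (Efix ∪ Eadd) := by
  classical
  have hmu : min u y ≤ u := min_le_left u y
  have hmM : min u y < max u y := min_lt_max.mpr (fun h => hyu h.symm)
  have hMv : max u y < v := max_lt huv hy
  have euy : s(u, y) = s(min u y, max u y) := by
    rcases le_total u y with h | h
    · rw [min_eq_left h, max_eq_right h]
    · rw [min_eq_right h, max_eq_left h]; exact Sym2.eq_swap
  have hneq : ∀ w : V, s(u, y) ≠ s(v, w) := by
    intro w h
    rcases Sym2.eq_iff.mp h with ⟨h1, h2⟩ | ⟨h1, h2⟩
    · exact (ne_of_lt huv) h1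
    · exact (ne_of_lt hy) h2
  have heE : s(u, y) ∉ Efix := fun h => Set.disjoint_left.mp hdisj h hey
  refine ⟨fun x => if x = s(u, y) then p₂ else
      if (∃ w, w < min u y ∧ x = s(v, w)) ∧ σ x = p₂ ∧ x ∈ Eadd then p₁ else σ x, ?_, ?_⟩
  · intro x hx
    beta_reduce
    rw [if_neg (fun h : x = s(u, y) => heE (h ▸ hx)), if_neg, hagree x hx]
    rintro ⟨-, -, h⟩
    exact Set.disjoint_left.mp hdisj hx h
  -- the validity claim
  have claimA : ∀ x ∈ Efix ∪ Eadd, x ≠ s(u, y) →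
      ¬ ((∃ w, w < min u y ∧ x = s(v, w)) ∧ σ x = p₂ ∧ x ∈ Eadd) →
      σ x = p₂ → ¬ Nests s(u, y) x := by
    intro x hx hxe hxC hxp hN
    rcases hx with hx | hx
    · exact hp₂ x hx ((hagree x hx).symm.trans hxp) hN
    · obtain ⟨w, hwu, hwv, hxw | hxw⟩ := hadd x hx
      · rw [hxw] at hN
        exact not_nests_of_mem u (Sym2.mem_mk_left u y) (Sym2.mem_mk_left u w) hN
      · have hwm : ¬ w < min u y := fun hlt => hxC ⟨⟨w, hlt, hxw⟩, hxp, hx⟩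
        rw [hxw, euy] at hN
        obtain ⟨a, b, c, d, hab, hbc, hcd, ⟨h1, h2⟩ | ⟨h1, h2⟩⟩ := hN
        · rcases Sym2.eq_iff.mp h1 with ⟨rfl, rfl⟩ | ⟨rfl, rfl⟩
          · rcases Sym2.eq_iff.mp h2 with ⟨rfl, rfl⟩ | ⟨rfl, rfl⟩
            · exact absurd (hbc.trans hcd) (asymm hMv)
            · exact absurd hcd (asymm hMv)
          · exact absurd ((hab.trans hbc).trans hcd) (asymm hmM)
        · rcases Sym2.eq_iff.mp h1 with ⟨rfl, rfl⟩ | ⟨rfl, rfl⟩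
          · rcases Sym2.eq_iff.mp h2 with ⟨rfl, rfl⟩ | ⟨rfl, rfl⟩
            · exact absurd hab (asymm (hmM.trans hMv))
            · exact hwm hab
          · exact absurd hbc (asymm hmM)
  have claimB : ∀ x₁, ((∃ w, w < min u y ∧ x₁ = s(v, w)) ∧ σ x₁ = p₂ ∧ x₁ ∈ Eadd) →
      ∀ x₂ ∈ Efix ∪ Eadd, x₂ ≠ s(u, y) → σ x₂ = p₁ → ¬ Nests x₁ x₂ := by
    rintro x₁ ⟨⟨w, hw, rfl⟩, hσ1, h1add⟩ x₂ hx₂ hx₂e hσ2 hN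
    have hwv : w < v := (hw.trans_le hmu).trans huv
    obtain ⟨w₁, hw₁m, hw₁w, hw₁add, hσw₁⟩ := hmv w hw h1add hσ1
    have hb₁E : s(v, w₁) ∈ Efix ∪ (Eadd \ {s(u, y)}) :=
      Or.inr ⟨hw₁add, fun h => hneq w₁ (Set.mem_singleton_iff.mp h).symm⟩
    have hx₂E : x₂ ∈ Efix ∪ (Eadd \ {s(u, y)}) := by
      rcases hx₂ with h | h
      exacts [Or.inl h, Or.inr ⟨h, hx₂e⟩]
    obtain ⟨a, b, c, d, hab, hbc, hcd, ⟨h1, h2⟩ | ⟨h1, h2⟩⟩ := hN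
    · rcases Sym2.eq_iff.mp h1 with ⟨rfl, rfl⟩ | ⟨rfl, rfl⟩
      · exact absurd ((hab.trans hbc).trans hcd) (asymm hwv)
      · -- x₂ = s(b, c) nested inside (w, v), hence inside (w₁, v)
        have hnest : Nests x₂ s(v, w₁) :=
          ⟨w₁, b, c, v, lt_of_le_of_lt hw₁w hab, hbc, hcd, Or.inr ⟨h2, Sym2.eq_swap⟩⟩
        exact hval x₂ hx₂E (s(v, w₁)) hb₁E (hσ2.trans hσw₁.symm) hnest
    · rcases Sym2.eq_iff.mp h1 with ⟨rfl, rfl⟩ | ⟨rfl, rfl⟩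
      · exact absurd hbc (asymm hwv)
      · -- x₂ = s(a, d) strictly contains (w, v), hence nests s(u, y)
        rcases hx₂ with hfx | hax
        · have hnn : Nests s(u, y) x₂ := by
            rw [euy]
            exact ⟨a, min u y, max u y, d, hab.trans hw, hmM, hMv.trans hcd,
              Or.inr ⟨rfl, h2⟩⟩
          exact hp₁ x₂ hfx ((hagree x₂ hfx).symm.trans hσ2) hnn
        · obtain ⟨w', hw'u, hw'v, h | h⟩ := hadd x₂ hax
          · rcases Sym2.eq_iff.mp (h.symm.trans h2) with ⟨rfl, rfl⟩ | ⟨rfl, rfl⟩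
            · exact absurd (hab.trans (hw.trans_le hmu)) (lt_irrefl u)
            · exact absurd hcd (asymm huv)
          · rcases Sym2.eq_iff.mp (h.symm.trans h2) with ⟨rfl, rfl⟩ | ⟨rfl, rfl⟩
            · exact absurd hab (asymm hwv)
            · exact absurd hcd (lt_irrefl v)
  intro x₁ hx₁ x₂ hx₂ heq hN
  beta_reduce at heq
  by_cases h₁ : x₁ = s(u, y) <;> by_cases h₂ : x₂ = s(u, y)
  · rw [h₁, h₂] at hN
    exact nests_irrefl _ hN
  · rw [if_pos h₁, if_neg h₂] at heq
    by_cases hC : (∃ w, w < min u y ∧ x₂ = s(v, w)) ∧ σ x₂ = p₂ ∧ x₂ ∈ Eadd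
    · rw [if_pos hC] at heq
      exact hne heq.symm
    · rw [if_neg hC] at heq
      exact claimA x₂ hx₂ h₂ hC heq.symm (h₁ ▸ hN)
  · rw [if_neg h₁, if_pos h₂] at heq
    by_cases hC : (∃ w, w < min u y ∧ x₁ = s(v, w)) ∧ σ x₁ = p₂ ∧ x₁ ∈ Eadd
    · rw [if_pos hC] at heq
      exact hne heq
    · rw [if_neg hC] at heq
      exact claimA x₁ hx₁ h₁ hC heq (h₂ ▸ nests_comm hN)
  · rw [if_neg h₁, if_neg h₂] at heq
    by_cases c₁ : (∃ w, w < min u y ∧ x₁ = s(v, w)) ∧ σ x₁ = p₂ ∧ x₁ ∈ Eadd <;>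
      by_cases c₂ : (∃ w, w < min u y ∧ x₂ = s(v, w)) ∧ σ x₂ = p₂ ∧ x₂ ∈ Eadd
    · obtain ⟨⟨w, -, hw⟩, -, -⟩ := c₁
      obtain ⟨⟨w', -, hw'⟩, -, -⟩ := c₂
      rw [hw, hw'] at hN
      exact not_nests_of_mem v (Sym2.mem_mk_left v w) (Sym2.mem_mk_left v w') hN
    · rw [if_pos c₁, if_neg c₂] at heq
      exact claimB x₁ c₁ x₂ hx₂ h₂ heq.symm hN
    · rw [if_neg c₁, if_pos c₂] at heq
      exact claimB x₂ c₂ x₁ hx₁ h₁ heq (nests_comm hN)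
    · rw [if_neg c₁, if_neg c₂] at heq
      have m₁ : x₁ ∈ Efix ∪ (Eadd \ {s(u, y)}) := by
        rcases hx₁ with h | h
        exacts [Or.inl h, Or.inr ⟨h, h₁⟩]
      have m₂ : x₂ ∈ Efix ∪ (Eadd \ {s(u, y)}) := by
        rcases hx₂ with h | h
        exacts [Or.inl h, Or.inr ⟨h, h₂⟩]
      exact hval x₁ m₁ x₂ m₂ heq hN

end Stmt9Aux

/-- Two missing vertices `u ≺ v`, all new edges having exactly one endpoint
in `{u, v}`: a new edge `{u, y}` with `y ≺ v` and at least two admissible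
pages can be removed without affecting solvability. -/
theorem stmt9 {V : Type*} [Fintype V] [LinearOrder V] {ℓ : ℕ}
    (u v : V) (huv : u < v)
    (Efix Eadd : Set (Sym2 V)) (hdisj : Disjoint Efix Eadd)
    (σfix : Sym2 V → Fin ℓ)
    (hfix : ∀ e₁ ∈ Efix, ∀ e₂ ∈ Efix, σfix e₁ = σfix e₂ → ¬ Nests e₁ e₂)
    (hadd : ∀ e ∈ Eadd, ∃ w : V, w ≠ u ∧ w ≠ v ∧ (e = s(u, w) ∨ e = s(v, w)))
    (y : V) (hy : y < v) (hey : s(u, y) ∈ Eadd)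
    (hP : 2 ≤ (admissiblePages Efix σfix s(u, y)).ncard) :
    Solvable Efix σfix (Efix ∪ Eadd) ↔
      Solvable Efix σfix (Efix ∪ (Eadd \ {s(u, y)})) := by
  constructor
  · rintro ⟨σ, h1, h2⟩
    refine ⟨σ, h1, fun a ha b hb => h2 a ?_ b ?_⟩
    · exact Set.union_subset_union_right _ Set.diff_subset ha
    · exact Set.union_subset_union_right _ Set.diff_subset hb
  · rintro ⟨σ, hagree, hval⟩
    -- two distinct admissible pages
    obtain ⟨p₁, p₂, hp₁, hp₂, hne⟩ :=
      (Set.one_lt_ncard_iff (Set.toFinite _)).mp hP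
    rw [admissiblePages, Set.mem_setOf_eq] at hp₁ hp₂
    -- y ≠ u
    have hyu : y ≠ u := by
      obtain ⟨w, hwu, hwv, h | h⟩ := hadd _ hey
      · rcases Sym2.eq_iff.mp h with ⟨-, rfl⟩ | ⟨h1, -⟩
        · exact hwu
        · exact absurd h1.symm hwu
      · rcases Sym2.eq_iff.mp h with ⟨h1, -⟩ | ⟨-, h2⟩
        · exact absurd h1 (ne_of_lt huv)
        · exact absurd h2 (ne_of_lt hy)
    -- orientation of the two pages
    have horient :
        (∀ w : V, w < min u y → s(v, w) ∈ Eadd → σ s(v, w) = p₂ →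
          ∃ w₁ : V, w₁ < min u y ∧ w₁ ≤ w ∧ s(v, w₁) ∈ Eadd ∧ σ s(v, w₁) = p₁) ∨
        (∀ w : V, w < min u y → s(v, w) ∈ Eadd → σ s(v, w) = p₁ →
          ∃ w₁ : V, w₁ < min u y ∧ w₁ ≤ w ∧ s(v, w₁) ∈ Eadd ∧ σ s(v, w₁) = p₂) := by
      by_contra hcon
      push_neg at hcon
      obtain ⟨⟨w, hw1, hw2, hw3, hw4⟩, ⟨w', hw'1, hw'2, hw'3, hw'4⟩⟩ := hcon
      rcases le_total w w' with h | h
      · exact hw'4 w hw1 h hw2 hw3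
      · exact hw4 w' hw'1 h hw'2 hw'3
    rcases horient with h | h
    · exact Stmt9Aux.key u v huv Efix Eadd hdisj σfix hadd y hy hyu hey
        p₁ p₂ hne hp₁ hp₂ σ hagree hval h
    · exact Stmt9Aux.key u v huv Efix Eadd hdisj σfix hadd y hy hyu hey
        p₂ p₁ hne.symm hp₂ hp₁ σ hagree hval h
end

section
/- Let (V, ≺) be a finite linear order, let E_fix be a set of edges over V with a page assignment σ_fix : E_fix → {1,…,ℓ} such that no two edges of E_fix assigned to the same page are in a nesting relation, and let E_add be a set of edges over V disjoint from E_fix. Call σ : E_fix ∪ E_add → {1,…,ℓ} a solution if σ agrees with σ_fix on E_fix and no two edges assigned to the same page are in a nesting relation. For e ∈ E_add let P(e) be its set of admissible pages with respect to ≺, E_fix and σ_fix, and let ⋈(e) = { e' ∈ E_add \ {e} : e and e' are in a nesting relation }. Then: (1) if P(e) = ∅ for some e ∈ E_add, no solution exists; and (2) if some solution exists and p ∈ P(e) \ ⋃_{e' ∈ ⋈(e)} P(e') for some e ∈ E_add, then there exists a solution σ with σ(e) = p. -/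
/-- `σ` is a solution: it agrees with `σfix` on `Efix` and no two edges of
`Efix ∪ Eadd` assigned to the same page are in a nesting relation. -/
def IsSolution {V : Type*} [LinearOrder V] {ℓ : ℕ} (Efix Eadd : Set (Sym2 V))
    (σfix : Sym2 V → Fin ℓ) (σ : Sym2 V → Fin ℓ) : Prop :=
  (∀ e ∈ Efix, σ e = σfix e) ∧
    ∀ e₁ ∈ Efix ∪ Eadd, ∀ e₂ ∈ Efix ∪ Eadd, σ e₁ = σ e₂ → ¬ Nests e₁ e₂

lemma sol_mem_adm {V : Type*} [LinearOrder V] {ℓ : ℕ} {Efix Eadd : Set (Sym2 V)}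
    {σfix σ : Sym2 V → Fin ℓ} (hσ : IsSolution Efix Eadd σfix σ)
    {e : Sym2 V} (he : e ∈ Eadd) : σ e ∈ admissiblePages Efix σfix e := by
  intro e' he' hpe
  exact hσ.2 e (Or.inr he) e' (Or.inl he') (by rw [hσ.1 e' he', hpe])

/-- (1) If some new edge has no admissible page, no solution exists.
(2) If a solution exists and `p` is a page admissible for a new edge `e` but
for none of the new edges in a nesting relation with `e`, then a solution
assigning `e` to `p` exists. -/
theorem stmt10 {V : Type*} [Fintype V] [LinearOrder V] {ℓ : ℕ}
    (Efix Eadd : Set (Sym2 V)) (hdisj : Disjoint Efix Eadd)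
    (σfix : Sym2 V → Fin ℓ)
    (hfix : ∀ e₁ ∈ Efix, ∀ e₂ ∈ Efix, σfix e₁ = σfix e₂ → ¬ Nests e₁ e₂) :
    ((∃ e ∈ Eadd, admissiblePages Efix σfix e = ∅) →
      ¬ ∃ σ, IsSolution Efix Eadd σfix σ) ∧
    (∀ e ∈ Eadd, ∀ p ∈ admissiblePages Efix σfix e,
      (∀ e' ∈ Eadd, e' ≠ e → Nests e e' → p ∉ admissiblePages Efix σfix e') →
      (∃ σ, IsSolution Efix Eadd σfix σ) →
      ∃ σ, IsSolution Efix Eadd σfix σ ∧ σ e = p) := by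
  constructor
  · rintro ⟨e, he, hemp⟩ ⟨σ, hσ⟩
    have := sol_mem_adm hσ he
    rw [hemp] at this
    exact this
  · rintro e he p hp hnone ⟨σ, hσ⟩
    have heF : e ∉ Efix := fun h => hdisj.ne_of_mem h he rfl
    classical
    refine ⟨Function.update σ e p, ⟨?_, ?_⟩, Function.update_self e p σ⟩
    · intro e' he'
      rw [Function.update_of_ne (fun h : e' = e => heF (h ▸ he')), hσ.1 e' he']
    · intro e₁ h₁ e₂ h₂ heq hn
      by_cases h1e : e₁ = e <;> by_cases h2e : e₂ = e
      · subst h1e h2e; exact nests_irrefl _ hn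
      · subst h1e
        rw [Function.update_self, Function.update_of_ne h2e] at heq
        rcases h₂ with h₂ | h₂
        · exact hp e₂ h₂ (by rw [← hσ.1 e₂ h₂, ← heq]) hn
        · exact hnone e₂ h₂ h2e hn (heq.symm ▸ sol_mem_adm hσ h₂)
      · subst h2e
        rw [Function.update_self, Function.update_of_ne h1e] at heq
        have hn' := nests_symm hn
        rcases h₁ with h₁ | h₁
        · exact hp e₁ h₁ (by rw [← hσ.1 e₁ h₁, heq]) hn'
        · exact hnone e₁ h₁ h1e hn' (heq ▸ sol_mem_adm hσ h₁)
      · rw [Function.update_of_ne h1e, Function.update_of_ne h2e] at heq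
        exact hσ.2 e₁ h₁ e₂ h₂ heq hn
end

section
/- Let A and B be disjoint sets, <_A a strict linear order on A, <_B a strict linear order on B, and R ⊆ A × B a relation such that: (i) for all a, a' ∈ A with a <_A a' and all b ∈ B, (a', b) ∈ R implies (a, b) ∈ R; and (ii) for all a ∈ A and all b, b' ∈ B with b <_B b', (a, b) ∈ R implies (a, b') ∈ R. Then the relation ≺ on A ∪ B defined by: a ≺ a' iff a <_A a' (for a, a' ∈ A), b ≺ b' iff b <_B b' (for b, b' ∈ B), a ≺ b iff (a, b) ∈ R, and b ≺ a iff (a, b) ∉ R (for a ∈ A, b ∈ B), is a strict linear order on A ∪ B. -/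
/-- The combined comparison relation on the disjoint union `A ⊕ B`:
within `A` use `rA`, within `B` use `rB`, and place `a` before `b`
exactly when `R a b` holds. -/
def sumLT {α β : Type*} (rA : α → α → Prop) (rB : β → β → Prop)
    (R : α → β → Prop) : α ⊕ β → α ⊕ β → Prop
  | Sum.inl a, Sum.inl a' => rA a a'
  | Sum.inr b, Sum.inr b' => rB b b'
  | Sum.inl a, Sum.inr b => R a b
  | Sum.inr b, Sum.inl a => ¬ R a b

/-- If `R ⊆ A × B` is downward closed in its first argument and upward
closed in its second argument (with respect to strict linear orders on `A`
and `B`), then the combined relation is a strict linear order on `A ⊕ B`. -/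
theorem stmt11 {α β : Type*} (rA : α → α → Prop) (rB : β → β → Prop)
    (R : α → β → Prop)
    (hA : IsStrictTotalOrder α rA) (hB : IsStrictTotalOrder β rB)
    (hi : ∀ a a' : α, rA a a' → ∀ b : β, R a' b → R a b)
    (hii : ∀ a : α, ∀ b b' : β, rB b b' → R a b → R a b') :
    IsStrictTotalOrder (α ⊕ β) (sumLT rA rB R) := by
  refine { trichotomous := ?_, irrefl := ?_, trans := ?_ }
  · -- trichotomous
    suffices H : ∀ x y, sumLT rA rB R x y ∨ x = y ∨ sumLT rA rB R y x from
      fun x y h1 h2 => ((H x y).resolve_left h1).resolve_right h2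
    rintro (a | b) (a' | b')
    · rcases (haveI := hA; trichotomous_of rA a a') with h | h | h
      · exact Or.inl h
      · exact Or.inr (Or.inl (by rw [h]))
      · exact Or.inr (Or.inr h)
    · by_cases h : R a b'
      · exact Or.inl h
      · exact Or.inr (Or.inr h)
    · by_cases h : R a' b
      · exact Or.inr (Or.inr h)
      · exact Or.inl h
    · rcases (haveI := hB; trichotomous_of rB b b') with h | h | h
      · exact Or.inl h
      · exact Or.inr (Or.inl (by rw [h]))
      · exact Or.inr (Or.inr h)
  · rintro (a | b)
    · exact hA.irrefl a
    · exact hB.irrefl b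
  · rintro (a | b) (a' | b') (a'' | b'') h1 h2
    · exact hA.trans _ _ _ h1 h2
    · exact hi _ _ h1 _ h2
    · rcases (haveI := hA; trichotomous_of rA a a'') with h | h | h
      · exact h
      · exact absurd (h ▸ h1) h2
      · exact absurd (hi _ _ h _ h1) h2
    · exact hii _ _ _ h2 h1
    · intro hr; exact h1 (hi _ _ h2 _ hr)
    · rcases (haveI := hB; trichotomous_of rB b b'') with h | h | h
      · exact h
      · exact absurd (h ▸ h2) h1
      · exact absurd (hii _ _ _ h h2) h1
    · intro hr; exact h2 (hii _ _ _ h1 hr)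
    · exact hB.trans _ _ _ h1 h2
end

section
/- Let G be a finite graph, H a subgraph of G, and ⟨≺_H, σ_H⟩ an ℓ-page queue layout of H. Let σ_G : E(G) → {1,…,ℓ} satisfy σ_G(e) = σ_H(e) for all e ∈ E(H), and let ≺_add be a strict linear order on V_add = V(G) \ V(H). For a relation R ⊆ V_add × V(H), define a comparison relation ◁_R on V(G) by: p ◁_R q iff p ≺_H q (for p, q ∈ V(H)); p ◁_R q iff p ≺_add q (for p, q ∈ V_add); p ◁_R q iff (p, q) ∈ R and q ◁_R p iff (p, q) ∉ R (for p ∈ V_add, q ∈ V(H)). Then there exists a linear order ≺_G on V(G) extending both ≺_H and ≺_add such that ⟨≺_G, σ_G⟩ is an ℓ-page queue layout of G, if and only if there exists R ⊆ V_add × V(H) such that: (i) for all a, a' ∈ V_add with a ≺_add a' and all b ∈ V(H), (a', b) ∈ R implies (a, b) ∈ R; (ii) for all a ∈ V_add and all b, b' ∈ V(H) with b ≺_H b', (a, b) ∈ R implies (a, b') ∈ R; and (iii) for every two edges e₁ = {a₁, b₁} and e₂ = {a₂, b₂} of G with σ_G(e₁) = σ_G(e₂) and with all four endpoints pairwise distinct,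 where the endpoints are named so that a₁ ◁_R b₁ and a₂ ◁_R b₂, it holds that a₁ ◁_R a₂ if and only if b₁ ◁_R b₂. -/
/-- Two (unordered) edges are in a nesting relation with respect to the
strict order `r`: there are `a`, `b`, `c`, `d` with `r a b`, `r b c`,
`r c d` such that one edge is `{a, d}` and the other is `{b, c}`. -/
def NestsRel {V : Type*} (r : V → V → Prop) (e₁ e₂ : Sym2 V) : Prop :=
  ∃ a b c d : V, r a b ∧ r b c ∧ r c d ∧
    ((e₁ = s(a, d) ∧ e₂ = s(b, c)) ∨ (e₁ = s(b, c) ∧ e₂ = s(a, d)))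

/-- The comparison relation `◁_R` on `V(G)` induced by the order `precH` on
the old vertices `VH`, the order `precAdd` on the new vertices `VHᶜ`, and a
relation `R` (conceptually `R ⊆ V_add × V(H)`): a new vertex `p` is placed
before an old vertex `q` exactly when `(p, q) ∈ R`. -/
def cmpR {V : Type*} (VH : Set V) (precH precAdd : V → V → Prop)
    (R : V → V → Prop) (p q : V) : Prop :=
  (p ∈ VH ∧ q ∈ VH ∧ precH p q) ∨
  (p ∉ VH ∧ q ∉ VH ∧ precAdd p q) ∨
  (p ∉ VH ∧ q ∈ VH ∧ R p q) ∨
  (p ∈ VH ∧ q ∉ VH ∧ ¬ R q p)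

section Aux

variable {V : Type*} {VH : Set V} {precH precAdd R : V → V → Prop} {p q : V}

lemma cmpR_HH (hp : p ∈ VH) (hq : q ∈ VH)
    (h : cmpR VH precH precAdd R p q) : precH p q := by
  rcases h with ⟨_, _, h⟩ | ⟨h', _, _⟩ | ⟨h', _, _⟩ | ⟨_, h', _⟩ <;>
    first | exact h | exact absurd hp h' | exact absurd hq h'

lemma cmpR_AA (hp : p ∉ VH) (hq : q ∉ VH)
    (h : cmpR VH precH precAdd R p q) : precAdd p q := by
  rcases h with ⟨h', _, _⟩ | ⟨_, _, h⟩ | ⟨_, h', _⟩ | ⟨h', _, _⟩ <;>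
    first | exact h | exact absurd h' hp | exact absurd h' hq

lemma cmpR_AH (hp : p ∉ VH) (hq : q ∈ VH)
    (h : cmpR VH precH precAdd R p q) : R p q := by
  rcases h with ⟨h', _, _⟩ | ⟨_, h', _⟩ | ⟨_, _, h⟩ | ⟨h', _, _⟩ <;>
    first | exact h | exact absurd h' hp | exact absurd hq h'

lemma cmpR_HA (hp : p ∈ VH) (hq : q ∉ VH)
    (h : cmpR VH precH precAdd R p q) : ¬ R q p := by
  rcases h with ⟨_, h', _⟩ | ⟨h', _, _⟩ | ⟨h', _, _⟩ | ⟨_, _, h⟩ <;>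
    first | exact h | exact absurd hp h' | exact absurd h' hq

end Aux

/-- 2-SAT characterization of extendability with fixed page assignment:
there is a spine order `≺_G` extending `≺_H` and `≺_add` making `⟨≺_G, σG⟩`
an `ℓ`-page queue layout of `G` iff there is a relation `R ⊆ V_add × V(H)`
satisfying the monotonicity conditions (i), (ii) and the queue condition
(iii) expressed via `◁_R`. -/
theorem stmt12 {V : Type*} [Fintype V] {ℓ : ℕ}
    (G H : SimpleGraph V) (hHG : H ≤ G) (VH : Set V)
    (hVH : ∀ e ∈ H.edgeSet, ∀ x ∈ e, x ∈ VH)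
    (precH precAdd : V → V → Prop)
    (hHirr : ∀ p ∈ VH, ¬ precH p p)
    (hHtrans : ∀ p ∈ VH, ∀ q ∈ VH, ∀ r ∈ VH, precH p q → precH q r → precH p r)
    (hHtot : ∀ p ∈ VH, ∀ q ∈ VH, p ≠ q → precH p q ∨ precH q p)
    (hAirr : ∀ p ∉ VH, ¬ precAdd p p)
    (hAtrans : ∀ p ∉ VH, ∀ q ∉ VH, ∀ r ∉ VH,
      precAdd p q → precAdd q r → precAdd p r)
    (hAtot : ∀ p ∉ VH, ∀ q ∉ VH, p ≠ q → precAdd p q ∨ precAdd q p)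
    (σH σG : Sym2 V → Fin ℓ)
    (hQH : ∀ e₁ ∈ H.edgeSet, ∀ e₂ ∈ H.edgeSet, σH e₁ = σH e₂ →
      ¬ NestsRel precH e₁ e₂)
    (hσ : ∀ e ∈ H.edgeSet, σG e = σH e) :
    (∃ precG : V → V → Prop, IsStrictTotalOrder V precG ∧
      (∀ p ∈ VH, ∀ q ∈ VH, (precG p q ↔ precH p q)) ∧
      (∀ p ∉ VH, ∀ q ∉ VH, (precG p q ↔ precAdd p q)) ∧
      (∀ e₁ ∈ G.edgeSet, ∀ e₂ ∈ G.edgeSet, σG e₁ = σG e₂ →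
        ¬ NestsRel precG e₁ e₂)) ↔
    (∃ R : V → V → Prop,
      (∀ a a' : V, a ∉ VH → a' ∉ VH → precAdd a a' →
        ∀ b ∈ VH, R a' b → R a b) ∧
      (∀ a : V, a ∉ VH → ∀ b ∈ VH, ∀ b' ∈ VH, precH b b' → R a b → R a b') ∧
      (∀ e₁ ∈ G.edgeSet, ∀ e₂ ∈ G.edgeSet, σG e₁ = σG e₂ →
        ∀ a₁ b₁ a₂ b₂ : V, e₁ = s(a₁, b₁) → e₂ = s(a₂, b₂) →
          cmpR VH precH precAdd R a₁ b₁ → cmpR VH precH precAdd R a₂ b₂ →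
          a₁ ≠ a₂ → a₁ ≠ b₂ → b₁ ≠ a₂ → b₁ ≠ b₂ →
          (cmpR VH precH precAdd R a₁ a₂ ↔ cmpR VH precH precAdd R b₁ b₂))) := by
  constructor
  · -- forward: take R := precG
    rintro ⟨precG, hSTO, hH, hA, hQ⟩
    have htr : ∀ {x y z}, precG x y → precG y z → precG x z :=
      fun hxy hyz => hSTO.trans _ _ _ hxy hyz
    have hirr : ∀ x, ¬ precG x x := fun x => hSTO.irrefl x
    have hasym : ∀ {x y}, precG x y → ¬ precG y x :=
      fun {x y} hxy hyx => hirr x (htr hxy hyx)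
    have htot : ∀ {x y}, x ≠ y → precG x y ∨ precG y x := by
      intro x y hxy
      rcases (show precG x y ∨ x = y ∨ precG y x by
          by_cases h1 : precG x y
          · exact Or.inl h1
          by_cases h2 : precG y x
          · exact Or.inr (Or.inr h2)
          exact Or.inr (Or.inl (hSTO.trichotomous x y h1 h2))) with h | h | h
      · exact Or.inl h
      · exact absurd h hxy
      · exact Or.inr h
    have key : ∀ p q : V, cmpR VH precH precAdd precG p q ↔ precG p q := by
      intro p q
      by_cases hp : p ∈ VH <;> by_cases hq : q ∈ VH
      · constructor
        · intro h; exact (hH p hp q hq).mpr (cmpR_HH hp hq h)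
        · intro h; exact Or.inl ⟨hp, hq, (hH p hp q hq).mp h⟩
      · constructor
        · intro h
          have hne : p ≠ q := fun e => hq (e ▸ hp)
          rcases htot hne with h' | h'
          · exact h'
          · exact absurd h' (cmpR_HA hp hq h)
        · intro h
          exact Or.inr (Or.inr (Or.inr ⟨hp, hq, hasym h⟩))
      · constructor
        · intro h; exact cmpR_AH hp hq h
        · intro h; exact Or.inr (Or.inr (Or.inl ⟨hp, hq, h⟩))
      · constructor
        · intro h; exact (hA p hp q hq).mpr (cmpR_AA hp hq h)
        · intro h; exact Or.inr (Or.inl ⟨hp, hq, (hA p hp q hq).mp h⟩)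
    refine ⟨precG, ?_, ?_, ?_⟩
    · intro a a' ha ha' haa b hb hR
      exact htr ((hA a ha a' ha').mpr haa) hR
    · intro a ha b hb b' hb' hbb hR
      exact htr hR ((hH b hb b' hb').mpr hbb)
    · intro e₁ he₁ e₂ he₂ hσe a₁ b₁ a₂ b₂ h1 h2 hc1 hc2 d1 d2 d3 d4
      rw [key] at hc1 hc2
      rw [key, key]
      constructor
      · intro haa
        by_contra hbb
        rcases htot d4 with h | h
        · exact hbb h
        · -- a₁ ◁ a₂ ◁ b₂ ◁ b₁ : nesting
          exact hQ e₁ he₁ e₂ he₂ hσe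
            ⟨a₁, a₂, b₂, b₁, haa, hc2, h, Or.inl ⟨h1, h2⟩⟩
      · intro hbb
        by_contra haa
        rcases htot d1 with h | h
        · exact haa h
        · -- a₂ ◁ a₁ ◁ b₁ ◁ b₂ : nesting
          exact hQ e₁ he₁ e₂ he₂ hσe
            ⟨a₂, a₁, b₁, b₂, h, hc1, hbb, Or.inr ⟨h1, h2⟩⟩
  · -- backward: take precG := cmpR
    rintro ⟨R, hR1, hR2, hR3⟩
    set precG := cmpR VH precH precAdd R with hprecG
    have hirr : ∀ x, ¬ precG x x := by
      intro x hx
      by_cases hxH : x ∈ VH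
      · exact hHirr x hxH (cmpR_HH hxH hxH hx)
      · exact hAirr x hxH (cmpR_AA hxH hxH hx)
    have htr : ∀ x y z, precG x y → precG y z → precG x z := by
      intro x y z hxy hyz
      by_cases hx : x ∈ VH <;> by_cases hy : y ∈ VH <;> by_cases hz : z ∈ VH
      · exact Or.inl ⟨hx, hz, hHtrans x hx y hy z hz (cmpR_HH hx hy hxy)
          (cmpR_HH hy hz hyz)⟩
      · -- H H A
        refine Or.inr (Or.inr (Or.inr ⟨hx, hz, fun hRzx => ?_⟩))
        exact cmpR_HA hy hz hyz (hR2 z hz x hx y hy (cmpR_HH hx hy hxy) hRzx)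
      · -- H A H
        have h1 := cmpR_HA hx hy hxy
        have h2 := cmpR_AH hy hz hyz
        have hxz : x ≠ z := fun e => h1 (e ▸ h2)
        refine Or.inl ⟨hx, hz, ?_⟩
        rcases hHtot x hx z hz hxz with h | h
        · exact h
        · exact absurd (hR2 y hy z hz x hx h h2) h1
      · -- H A A
        refine Or.inr (Or.inr (Or.inr ⟨hx, hz, fun hRzx => ?_⟩))
        exact cmpR_HA hx hy hxy
          (hR1 y z hy hz (cmpR_AA hy hz hyz) x hx hRzx)
      · -- A H H
        exact Or.inr (Or.inr (Or.inl ⟨hx, hz,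
          hR2 x hx y hy z hz (cmpR_HH hy hz hyz) (cmpR_AH hx hy hxy)⟩))
      · -- A H A
        have h1 := cmpR_AH hx hy hxy
        have h2 := cmpR_HA hy hz hyz
        have hxz : x ≠ z := fun e => h2 (e ▸ h1)
        refine Or.inr (Or.inl ⟨hx, hz, ?_⟩)
        rcases hAtot x hx z hz hxz with h | h
        · exact h
        · exact absurd (hR1 z x hz hx h y hy h1) h2
      · -- A A H
        exact Or.inr (Or.inr (Or.inl ⟨hx, hz,
          hR1 x y hx hy (cmpR_AA hx hy hxy) z hz (cmpR_AH hy hz hyz)⟩))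
      · exact Or.inr (Or.inl ⟨hx, hz, hAtrans x hx y hy z hz
          (cmpR_AA hx hy hxy) (cmpR_AA hy hz hyz)⟩)
    have htri : ∀ x y : V, precG x y ∨ x = y ∨ precG y x := by
      intro x y
      by_cases hxy : x = y
      · exact Or.inr (Or.inl hxy)
      by_cases hx : x ∈ VH <;> by_cases hy : y ∈ VH
      · rcases hHtot x hx y hy hxy with h | h
        · exact Or.inl (Or.inl ⟨hx, hy, h⟩)
        · exact Or.inr (Or.inr (Or.inl ⟨hy, hx, h⟩))
      · by_cases hR : R y x
        · exact Or.inr (Or.inr (Or.inr (Or.inr (Or.inl ⟨hy, hx, hR⟩))))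
        · exact Or.inl (Or.inr (Or.inr (Or.inr ⟨hx, hy, hR⟩)))
      · by_cases hR : R x y
        · exact Or.inl (Or.inr (Or.inr (Or.inl ⟨hx, hy, hR⟩)))
        · exact Or.inr (Or.inr (Or.inr (Or.inr (Or.inr ⟨hy, hx, hR⟩))))
      · rcases hAtot x hx y hy hxy with h | h
        · exact Or.inl (Or.inr (Or.inl ⟨hx, hy, h⟩))
        · exact Or.inr (Or.inr (Or.inr (Or.inl ⟨hy, hx, h⟩)))
    have hasym : ∀ {x y}, precG x y → ¬ precG y x :=
      fun {x y} hxy hyx => hirr x (htr x y x hxy hyx)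
    have hne : ∀ {x y}, precG x y → x ≠ y :=
      fun {x y} hxy e => hirr x (e ▸ hxy)
    refine ⟨precG, { trichotomous := fun x y h1 h2 => ((htri x y).resolve_left h1).resolve_right h2, irrefl := hirr, trans := htr }, ?_, ?_, ?_⟩
    · intro p hp q hq
      exact ⟨cmpR_HH hp hq, fun h => Or.inl ⟨hp, hq, h⟩⟩
    · intro p hp q hq
      exact ⟨cmpR_AA hp hq, fun h => Or.inr (Or.inl ⟨hp, hq, h⟩)⟩
    · rintro e₁ he₁ e₂ he₂ hσe ⟨a, b, c, d, hab, hbc, hcd, h | h⟩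
      · have had : precG a d := htr a b d hab (htr b c d hbc hcd)
        have := (hR3 e₁ he₁ e₂ he₂ hσe a d b c h.1 h.2 had hbc
          (hne hab) (hne (htr a b c hab hbc)) (Ne.symm (hne (htr b c d hbc hcd)))
          (Ne.symm (hne hcd))).mp hab
        exact hasym hcd this
      · have had : precG a d := htr a b d hab (htr b c d hbc hcd)
        have := (hR3 e₁ he₁ e₂ he₂ hσe b c a d h.1 h.2 hbc had
          (Ne.symm (hne hab)) (hne (htr b c d hbc hcd))
          (Ne.symm (hne (htr a b c hab hbc))) (hne hcd)).mpr hcd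
        exact hasym hab this
end

section
/- Let (V, ≺) be a linear order containing elements a₁ ≺ a₂ ≺ ⋯ ≺ a_{n+1} ≺ r ≺ s ≺ b₁ ≺ b₂ ≺ ⋯ ≺ b_{m+1}, and let 1 ≤ i ≤ n and 1 ≤ j ≤ m. Consider the four edges {a_i, b_j}, {a_{i+1}, b_{j+1}}, {a_i, r} and {s, b_{j+1}}. Let x, y ∈ V satisfy a₁ ≺ x ≺ a_{n+1} and b₁ ≺ y ≺ b_{m+1}, with x ∉ {a₁,…,a_{n+1}} and y ∉ {b₁,…,b_{m+1}}. If the edge {x, y} is in a nesting relation with none of the four listed edges, then a_i ≺ x ≺ a_{i+1} and b_j ≺ y ≺ b_{j+1}. -/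
/-- The edge gadget: if `a₁ ≺ ⋯ ≺ a_{n+1} ≺ vr ≺ vs ≺ b₁ ≺ ⋯ ≺ b_{m+1}`
(here `a t` for `t : Fin (n+1)` is `a_{t+1}`, likewise for `b`), the vertex
`x` lies strictly between `a₁` and `a_{n+1}` but coincides with no `a_t`,
the vertex `y` lies strictly between `b₁` and `b_{m+1}` but coincides with
no `b_t`, and the edge `{x, y}` is in a nesting relation with none of the
four edges `{a_i, b_j}`, `{a_{i+1}, b_{j+1}}`, `{a_i, vr}`, `{vs, b_{j+1}}`,
then `a_i ≺ x ≺ a_{i+1}` and `b_j ≺ y ≺ b_{j+1}`. -/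
theorem stmt13 {V : Type*} [LinearOrder V] {n m : ℕ}
    (a : Fin (n + 1) → V) (b : Fin (m + 1) → V) (vr vs : V)
    (ha : StrictMono a) (hb : StrictMono b)
    (har : a (Fin.last n) < vr) (hrs : vr < vs) (hsb : vs < b 0)
    (i : Fin n) (j : Fin m) (x y : V)
    (hx1 : a 0 < x) (hx2 : x < a (Fin.last n))
    (hy1 : b 0 < y) (hy2 : y < b (Fin.last m))
    (hxa : ∀ t, x ≠ a t) (hyb : ∀ t, y ≠ b t)
    (h₁ : ¬ Nests s(x, y) s(a i.castSucc, b j.castSucc))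
    (h₂ : ¬ Nests s(x, y) s(a i.succ, b j.succ))
    (h₃ : ¬ Nests s(x, y) s(a i.castSucc, vr))
    (h₄ : ¬ Nests s(x, y) s(vs, b j.succ)) :
    (a i.castSucc < x ∧ x < a i.succ) ∧ (b j.castSucc < y ∧ y < b j.succ) := by
  have hxr : x < vr := lt_trans hx2 har
  have hvsy : vs < y := lt_trans hsb hy1
  have hxvs : x < vs := lt_trans hxr hrs
  have hvry : vr < y := lt_trans hrs hvsy
  have hxy : x < y := lt_trans hxvs hvsy
  have hav : a i.castSucc < vr := lt_of_le_of_lt (ha.monotone (Fin.le_last _)) har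
  have hbv : vs < b j.succ := lt_of_lt_of_le hsb (hb.monotone (Fin.zero_le _))
  have hix : a i.castSucc < x := by
    rcases lt_or_gt_of_ne (hxa i.castSucc) with h | h
    · exact absurd ⟨x, a i.castSucc, vr, y, h, hav, hvry, Or.inl ⟨rfl, rfl⟩⟩ h₃
    · exact h
  have hyj : y < b j.succ := by
    rcases lt_or_gt_of_ne (hyb j.succ) with h | h
    · exact h
    · exact absurd ⟨x, vs, b j.succ, y, hxvs, hbv, h, Or.inl ⟨rfl, rfl⟩⟩ h₄
  have hxi : x < a i.succ := by
    rcases lt_or_gt_of_ne (hxa i.succ) with h | h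
    · exact h
    · exact absurd ⟨a i.succ, x, y, b j.succ, h, hxy, hyj, Or.inr ⟨rfl, rfl⟩⟩ h₂
  have hjy : b j.castSucc < y := by
    rcases lt_or_gt_of_ne (hyb j.castSucc) with h | h
    · exact absurd ⟨a i.castSucc, x, y, b j.castSucc, hix, hxy, h, Or.inr ⟨rfl, rfl⟩⟩ h₁
    · exact h
  exact ⟨⟨hix, hxi⟩, ⟨hjy, hyj⟩⟩
end

section
/- Let k ≥ 1 and let (V, ≺) be a linear order containing, for each δ ∈ {1,…,k+1}, elements L_δ ≺ Z_δ ≺ R_δ and, for each δ ∈ {1,…,k}, elements u_δ¹ ≺ u_δ² ≺ ⋯ ≺ u_δ^{n_δ+1} (with n_δ ≥ 1), arranged so that R_δ ≺ u_δ¹ and u_δ^{n_δ+1} ≺ L_{δ+1} for all δ ∈ {1,…,k}. Fix β < γ in {1,…,k}, i ∈ {1,…,n_β} and j ∈ {1,…,n_γ}, and consider the edge set E_e = { {L₁, u_β¹}, {R_β, u_β¹}, {u_β^i, u_γ^j}, {u_β^{i+1}, u_γ^{j+1}}, {R_β, u_β^{i+1}}, {u_β^i, L_{β+1}}, {R_γ,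 u_γ^{j+1}}, {u_γ^j, L_{γ+1}}, {u_γ^{n_γ+1}, L_{γ+1}}, {u_γ^{n_γ+1}, R_{k+1}} }. Then for every α ∈ {1,…,k} and every element w ∈ V distinct from all the elements L_δ, Z_δ, R_δ and u_δ^m named above, if L₁ ≺ w ≺ L_α or u_α^{n_α+1} ≺ w ≺ R_{k+1}, then the edge {w, Z_α} is in a nesting relation with at least one edge of E_e. -/
/-- Visibility-blocking property of the edge gadget for colors `β < γ`:
for every color `α ∈ {1,…,k}` (represented by `α : Fin k`, with `Z_α`
being `Z α.castSucc`) and every element `w` distinct from all named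
elements, if `L₁ ≺ w ≺ L_α` or `u_α^{n_α+1} ≺ w ≺ R_{k+1}`, then the edge
`{w, Z_α}` is in a nesting relation with some edge of the gadget.
Here `u δ t` for `t : Fin (n δ + 1)` denotes `u_δ^{t+1}` and the elements
`L δ, Z δ, R δ` for `δ : Fin (k+1)` denote `L_{δ+1}, Z_{δ+1}, R_{δ+1}`. -/
theorem stmt14 {V : Type*} [LinearOrder V] {k : ℕ} (hk : 1 ≤ k)
    (L Z R : Fin (k + 1) → V) (n : Fin k → ℕ) (hn : ∀ δ, 1 ≤ n δ)
    (u : (δ : Fin k) → Fin (n δ + 1) → V)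
    (hLZ : ∀ δ, L δ < Z δ) (hZR : ∀ δ, Z δ < R δ)
    (hu : ∀ δ, StrictMono (u δ))
    (hRu : ∀ δ : Fin k, R δ.castSucc < u δ 0)
    (huL : ∀ δ : Fin k, u δ (Fin.last (n δ)) < L δ.succ)
    (β γ : Fin k) (hβγ : β < γ) (i : Fin (n β)) (j : Fin (n γ))
    (α : Fin k) (w : V)
    (hwL : ∀ δ, w ≠ L δ) (hwZ : ∀ δ, w ≠ Z δ) (hwR : ∀ δ, w ≠ R δ)
    (hwu : ∀ δ t, w ≠ u δ t)
    (hw : (L 0 < w ∧ w < L α.castSucc) ∨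
      (u α (Fin.last (n α)) < w ∧ w < R (Fin.last k))) :
    ∃ e ∈ ({s(L 0, u β 0), s(R β.castSucc, u β 0),
        s(u β i.castSucc, u γ j.castSucc), s(u β i.succ, u γ j.succ),
        s(R β.castSucc, u β i.succ), s(u β i.castSucc, L β.succ),
        s(R γ.castSucc, u γ j.succ), s(u γ j.castSucc, L γ.succ),
        s(u γ (Fin.last (n γ)), L γ.succ),
        s(u γ (Fin.last (n γ)), R (Fin.last k))} : Set (Sym2 V)),
      Nests s(w, Z α.castSucc) e := by
  have humono : ∀ δ : Fin k, ∀ s t : Fin (n δ + 1), s ≤ t → u δ s ≤ u δ t :=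
    fun δ => fun s t h => (hu δ).monotone h
  have gap : ∀ δ : Fin k, R δ.castSucc < L δ.succ := fun δ =>
    lt_trans (lt_of_lt_of_le (hRu δ) (humono δ 0 _ (Fin.le_last 0))) (huL δ)
  have hLm : StrictMono L := Fin.strictMono_iff_lt_succ.mpr fun δ =>
    lt_trans (hLZ δ.castSucc) (lt_trans (hZR δ.castSucc) (gap δ))
  have hRm : StrictMono R := Fin.strictMono_iff_lt_succ.mpr fun δ =>
    lt_trans (gap δ) (lt_trans (hLZ δ.succ) (hZR δ.succ))
  have hcast : ∀ {δ ε : Fin k}, δ ≤ ε → δ.castSucc ≤ ε.castSucc := fun {δ ε} h => Fin.castSucc_le_castSucc_iff.mpr h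
  have hsc : ∀ {δ ε : Fin k}, δ < ε → δ.succ ≤ ε.castSucc := fun {δ ε} h => Fin.succ_le_castSucc_iff.mpr h
  have huls : ∀ δ : Fin k, ∀ t : Fin (n δ + 1), u δ t < L δ.succ := fun δ t =>
    lt_of_le_of_lt (humono δ t _ (Fin.le_last t)) (huL δ)
  have hRu' : ∀ δ : Fin k, ∀ t, R δ.castSucc < u δ t := fun δ t =>
    lt_of_lt_of_le (hRu δ) (humono δ 0 t (Fin.zero_le t))
  have hZu : ∀ {δ ε : Fin k}, δ ≤ ε → ∀ t, Z δ.castSucc < u ε t := fun {δ ε} h t =>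
    lt_of_lt_of_le (lt_of_lt_of_le (hZR δ.castSucc) (hRm.monotone (hcast h)))
      (le_of_lt (hRu' ε t))
  have huZ : ∀ {δ ε : Fin k}, δ < ε → ∀ t, u δ t < Z ε.castSucc := fun {δ ε} h t =>
    lt_trans (huls δ t) (lt_of_le_of_lt (hLm.monotone (hsc h)) (hLZ ε.castSucc))
  have hLZ' : ∀ {δ ε : Fin k}, δ < ε → L δ.succ < Z ε.castSucc := fun {δ ε} h =>
    lt_of_le_of_lt (hLm.monotone (hsc h)) (hLZ ε.castSucc)
  have hZR' : ∀ {δ ε : Fin k}, δ ≤ ε → Z δ.castSucc < R ε.castSucc := fun {δ ε} h =>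
    lt_of_lt_of_le (hZR δ.castSucc) (hRm.monotone (hcast h))
  have hZRlast : ∀ δ : Fin k, Z δ.castSucc < R (Fin.last k) := fun δ =>
    lt_of_lt_of_le (hZR δ.castSucc) (hRm.monotone (Fin.le_last δ.castSucc))
  rcases hw with ⟨hw1, hw2⟩ | ⟨hw1, hw2⟩
  · -- Case A: L 0 < w < L α
    have hwZ' : w < Z α.castSucc := lt_trans hw2 (hLZ α.castSucc)
    rcases le_or_gt α β with hab | hab
    · exact ⟨s(L 0, u β 0), Set.mem_insert _ _, L 0, w, Z α.castSucc, u β 0,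
        hw1, hwZ', hZu hab 0, Or.inr ⟨rfl, rfl⟩⟩
    · rcases le_or_gt α γ with hag | hag
      · rcases (hwu β i.castSucc).lt_or_gt with hwi | hwi
        · exact ⟨s(u β i.castSucc, L β.succ), Set.mem_insert_of_mem _ (Set.mem_insert_of_mem _ (Set.mem_insert_of_mem _ (Set.mem_insert_of_mem _ (Set.mem_insert_of_mem _ (Set.mem_insert _ _))))), w, u β i.castSucc, L β.succ,
            Z α.castSucc, hwi, huls β i.castSucc, hLZ' hab, Or.inl ⟨rfl, rfl⟩⟩
        · exact ⟨s(u β i.castSucc, u γ j.castSucc), Set.mem_insert_of_mem _ (Set.mem_insert_of_mem _ (Set.mem_insert _ _)), u β i.castSucc, w,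
            Z α.castSucc, u γ j.castSucc, hwi, hwZ', hZu hag j.castSucc,
            Or.inr ⟨rfl, rfl⟩⟩
      · rcases (hwu γ (Fin.last (n γ))).lt_or_gt with hwg | hwg
        · exact ⟨s(u γ (Fin.last (n γ)), L γ.succ), Set.mem_insert_of_mem _ (Set.mem_insert_of_mem _ (Set.mem_insert_of_mem _ (Set.mem_insert_of_mem _ (Set.mem_insert_of_mem _ (Set.mem_insert_of_mem _ (Set.mem_insert_of_mem _ (Set.mem_insert_of_mem _ (Set.mem_insert _ _)))))))), w, u γ (Fin.last (n γ)),
            L γ.succ, Z α.castSucc, hwg, huL γ, hLZ' hag, Or.inl ⟨rfl, rfl⟩⟩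
        · exact ⟨s(u γ (Fin.last (n γ)), R (Fin.last k)), Set.mem_insert_of_mem _ (Set.mem_insert_of_mem _ (Set.mem_insert_of_mem _ (Set.mem_insert_of_mem _ (Set.mem_insert_of_mem _ (Set.mem_insert_of_mem _ (Set.mem_insert_of_mem _ (Set.mem_insert_of_mem _ (Set.mem_insert_of_mem _ (rfl))))))))),
            u γ (Fin.last (n γ)), w, Z α.castSucc, R (Fin.last k),
            hwg, hwZ', hZRlast α, Or.inr ⟨rfl, rfl⟩⟩
  · -- Case B: u α last < w < R last
    have hZw : Z α.castSucc < w := lt_trans (hZu le_rfl (Fin.last (n α))) hw1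
    rcases le_or_gt α β with hab | hab
    · rcases (hwu β 0).lt_or_gt with h0 | h0
      · exact ⟨s(L 0, u β 0), Set.mem_insert _ _, L 0, Z α.castSucc, w, u β 0,
          lt_of_le_of_lt (hLm.monotone (Fin.zero_le α.castSucc)) (hLZ α.castSucc),
          hZw, h0, Or.inr ⟨Sym2.eq_swap, rfl⟩⟩
      · exact ⟨s(R β.castSucc, u β 0), Set.mem_insert_of_mem _ (Set.mem_insert _ _), Z α.castSucc, R β.castSucc, u β 0, w,
          hZR' hab, hRu β, h0, Or.inl ⟨Sym2.eq_swap, rfl⟩⟩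
    · rcases (hwu γ j.succ).lt_or_gt with hj | hj
      · exact ⟨s(u β i.succ, u γ j.succ), Set.mem_insert_of_mem _ (Set.mem_insert_of_mem _ (Set.mem_insert_of_mem _ (Set.mem_insert _ _))), u β i.succ, Z α.castSucc, w,
          u γ j.succ, huZ hab i.succ, hZw, hj, Or.inr ⟨Sym2.eq_swap, rfl⟩⟩
      · rcases le_or_gt α γ with hag | hag
        · exact ⟨s(R γ.castSucc, u γ j.succ), Set.mem_insert_of_mem _ (Set.mem_insert_of_mem _ (Set.mem_insert_of_mem _ (Set.mem_insert_of_mem _ (Set.mem_insert_of_mem _ (Set.mem_insert_of_mem _ (Set.mem_insert _ _)))))), Z α.castSucc, R γ.castSucc,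
            u γ j.succ, w, hZR' hag, hRu' γ j.succ, hj, Or.inl ⟨Sym2.eq_swap, rfl⟩⟩
        · exact ⟨s(u γ (Fin.last (n γ)), R (Fin.last k)), Set.mem_insert_of_mem _ (Set.mem_insert_of_mem _ (Set.mem_insert_of_mem _ (Set.mem_insert_of_mem _ (Set.mem_insert_of_mem _ (Set.mem_insert_of_mem _ (Set.mem_insert_of_mem _ (Set.mem_insert_of_mem _ (Set.mem_insert_of_mem _ (rfl))))))))),
            u γ (Fin.last (n γ)), Z α.castSucc, w, R (Fin.last k),
            huZ hag (Fin.last (n γ)), hZw, hw2, Or.inr ⟨Sym2.eq_swap, rfl⟩⟩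
end

section
/- Let n, k ≥ 1, let π be a permutation of {1,…,n}, let G_π be its permutation graph, let S ⊆ {1,…,n}, and let c₀ : S → {1,…,k}. Let Q(π) be the graph with vertex set {(v, a) : v ∈ {1,…,n}, a ∈ {1,2}} and edges e_v = {(v,1),(v,2)} for v ∈ {1,…,n}, equipped with the linear order ≺_{Q(π)} in which (v₁,a₁) ≺_{Q(π)} (v₂,a₂) iff a₁ < a₂, or a₁ = a₂ = 1 and v₁ < v₂, or a₁ = a₂ = 2 and π⁻¹(v₁) < π⁻¹(v₂). Then c₀ extends to a proper k-coloring of G_π if and only if there exists σ : E(Q(π)) → {1,…,k} with σ(e_v) = c₀(v) for all v ∈ S such that ⟨≺_{Q(π)}, σ⟩ is a k-page queue layout of Q(π). -/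
/-- Adjacency in the permutation graph `G_π`: `π` reverses the relative
order of `v₁` and `v₂`. -/
def permAdj {n : ℕ} (π : Equiv.Perm (Fin n)) (v₁ v₂ : Fin n) : Prop :=
  (v₁ < v₂ ∧ π.symm v₂ < π.symm v₁) ∨ (v₂ < v₁ ∧ π.symm v₁ < π.symm v₂)

lemma nest_iff {n : ℕ} (π : Equiv.Perm (Fin n)) (v₁ v₂ : Fin n) :
    NestsRel (qOrder π) s((v₁, (0 : Fin 2)), (v₁, 1)) s((v₂, (0 : Fin 2)), (v₂, 1)) ↔
      permAdj π v₁ v₂ := by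
  constructor
  · rintro ⟨a, b, c, d, rab, rbc, rcd, hcase⟩
    rcases hcase with ⟨h1, h2⟩ | ⟨h1, h2⟩ <;>
      rw [Sym2.eq, Sym2.rel_iff'] at h1 h2 <;>
      rcases h1 with ⟨rfl, rfl⟩ | ⟨rfl, rfl⟩ <;>
      rcases h2 with ⟨rfl, rfl⟩ | ⟨rfl, rfl⟩ <;>
      simp only [qOrder, permAdj] at rab rbc rcd ⊢ <;>
      simp_all <;> omega
  · rintro (⟨h1, h2⟩ | ⟨h1, h2⟩)
    · exact ⟨(v₁, 0), (v₂, 0), (v₂, 1), (v₁, 1),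
        Or.inr (Or.inl ⟨rfl, rfl, h1⟩), Or.inl (by norm_num),
        Or.inr (Or.inr ⟨rfl, rfl, h2⟩), Or.inl ⟨rfl, rfl⟩⟩
    · exact ⟨(v₂, 0), (v₁, 0), (v₁, 1), (v₂, 1),
        Or.inr (Or.inl ⟨rfl, rfl, h1⟩), Or.inl (by norm_num),
        Or.inr (Or.inr ⟨rfl, rfl, h2⟩), Or.inr ⟨rfl, rfl⟩⟩

/-- A partial coloring `c₀ : S → {1,…,k}` extends to a proper `k`-coloring
of the permutation graph `G_π` iff there is a page assignment
`σ : E(Q(π)) → {1,…,k}` (the edge `e_v = {(v,1),(v,2)}` being indexed by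
`v`) agreeing with `c₀` on `S` such that `⟨≺_{Q(π)}, σ⟩` is a `k`-page
queue layout of `Q(π)`. -/
theorem stmt15 {n k : ℕ} (hn : 1 ≤ n) (hk : 1 ≤ k)
    (π : Equiv.Perm (Fin n)) (S : Set (Fin n)) (c₀ : Fin n → Fin k) :
    (∃ c : Fin n → Fin k, (∀ v ∈ S, c v = c₀ v) ∧
      ∀ v₁ v₂ : Fin n, permAdj π v₁ v₂ → c v₁ ≠ c v₂) ↔
    (∃ σ : Fin n → Fin k, (∀ v ∈ S, σ v = c₀ v) ∧
      ∀ v₁ v₂ : Fin n, v₁ ≠ v₂ → σ v₁ = σ v₂ →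
        ¬ NestsRel (qOrder π) s((v₁, (0 : Fin 2)), (v₁, 1))
          s((v₂, (0 : Fin 2)), (v₂, 1))) := by
  constructor
  · rintro ⟨c, hS, hprop⟩
    refine ⟨c, hS, fun v₁ v₂ _ heq hnest => ?_⟩
    exact hprop v₁ v₂ ((nest_iff π v₁ v₂).1 hnest) heq
  · rintro ⟨σ, hS, hq⟩
    refine ⟨σ, hS, fun v₁ v₂ hadj heq => ?_⟩
    have hne : v₁ ≠ v₂ := by
      rcases hadj with ⟨h, _⟩ | ⟨h, _⟩
      · exact ne_of_lt h
      · exact (ne_of_lt h).symm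
    exact hq v₁ v₂ hne heq ((nest_iff π v₁ v₂).2 hadj)
end
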